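/- In dimension 1, dual quantization on a fixed grid preserves the convex order: let Γ = {x₁ < … < x_N} and let μ, η be probability measures with support contained in [x₁,x_N] such that μ ≤_cvx η. If μ̌^Γ and η̌^Γ denote the laws of the dual (splitting) quantizations of μ and η on Γ, then μ̌^Γ ≤_cvx η̌^Γ. -/

import Mathlib

open MeasureTheory Set

noncomputable section

abbrev Ed (d : ℕ) := EuclideanSpace ℝ (Fin d)

variable {E : Type*} [NormedAddCommGroup E] [NormedSpace ℝ E] [MeasurableSpace E] [BorelSpace E]

/-- A coupling between `μ` and `ν`. -/
def IsCoupling (π : Measure (E × E)) (μ ν : Measure E) : Prop :=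
  π.map Prod.fst = μ ∧ π.map Prod.snd = ν

/-- A martingale coupling between `μ` and `ν` : a probability coupling such that the
conditional expectation of the second coordinate given the first is the first. -/
def IsMartingaleCoupling (π : Measure (E × E)) (μ ν : Measure E) : Prop :=
  IsProbabilityMeasure π ∧ IsCoupling π μ ν ∧
    ∀ A : Set E, MeasurableSet A →
      ∫ q in A ×ˢ (univ : Set E), (q.2 - q.1) ∂π = 0

/-- The convex order `μ ≤_cvx ν`. -/
def ConvexOrder (μ ν : Measure E) : Prop :=
  ∀ φ : E → ℝ, ConvexOn ℝ univ φ → Integrable φ μ → Integrable φ ν →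
    ∫ x, φ x ∂μ ≤ ∫ x, φ x ∂ν

/-- The `p`-th power transport cost of a coupling. -/
def pCost (p : ℝ) (π : Measure (E × E)) : ℝ := ∫ q, ‖q.2 - q.1‖ ^ p ∂π

/-- `W_p(μ,ν)^p`. -/
def WpPow (p : ℝ) (μ ν : Measure E) : ℝ :=
  sInf {c | ∃ π : Measure (E × E), IsProbabilityMeasure π ∧ IsCoupling π μ ν ∧ c = pCost p π}

/-- The Wasserstein distance `W_p(μ,ν)`. -/
def Wp (p : ℝ) (μ ν : Measure E) : ℝ := WpPow p μ ν ^ (1 / p)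

/-- `M_p(μ,ν)^p` : the martingale transport cost. -/
def MpPow (p : ℝ) (μ ν : Measure E) : ℝ :=
  sInf {c | ∃ π : Measure (E × E), IsMartingaleCoupling π μ ν ∧ c = pCost p π}

/-- `M_p(μ,ν)`. -/
def Mp (p : ℝ) (μ ν : Measure E) : ℝ := MpPow p μ ν ^ (1 / p)

/-- A Borel nearest-neighbour projection onto the finite set `Γ`. -/
def IsNearestProj (Γ : Finset E) (f : E → E) : Prop :=
  Measurable f ∧ ∀ x, f x ∈ Γ ∧ ‖x - f x‖ = Metric.infDist x (Γ : Set E)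

/-- `e_p(Γ,μ)^p`, the `p`-th power quantization error on the grid `Γ`. -/
def quantErrPow (p : ℝ) (Γ : Finset E) (μ : Measure E) : ℝ :=
  ∫ x, Metric.infDist x (Γ : Set E) ^ p ∂μ

/-- `Γ` is an `L^p`-optimal `N`-quantizer of `μ`. -/
def IsOptimalQuantizer (p : ℝ) (N : ℕ) (Γ : Finset E) (μ : Measure E) : Prop :=
  Γ.Nonempty ∧ Γ.card ≤ N ∧
    ∀ Γ' : Finset E, Γ'.Nonempty → Γ'.card ≤ N → quantErrPow p Γ μ ≤ quantErrPow p Γ' μ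

/-- `ν` is supported on at most `N` points. -/
def SuppLE (N : ℕ) (ν : Measure E) : Prop :=
  ∃ s : Finset E, s.card ≤ N ∧ ν ((s : Set E)ᶜ) = 0

/-- The splitting operator associated with the grid `x₀ < x₁ < ⋯ < x_N` : a point `z` in
`[x_i, x_{i+1})` is sent to `x_i` if `u ≤ (x_{i+1}-z)/(x_{i+1}-x_i)` and to `x_{i+1}`
otherwise; `x_N` (and any point outside the grid range) is left unchanged. -/
def splitOp {N : ℕ} (x : Fin (N + 1) → ℝ) (z u : ℝ) : ℝ :=
  if h : ∃ i : Fin N, x i.castSucc ≤ z ∧ z < x i.succ then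
    if u ≤ (x (Classical.choose h).succ - z)
        / (x (Classical.choose h).succ - x (Classical.choose h).castSucc)
    then x (Classical.choose h).castSucc else x (Classical.choose h).succ
  else z

/-- The dual quantization of `μ` on the grid `x` : the law of `splitOp x Z U` where
`Z ∼ μ` and `U` is uniform on `[0,1]`, independent of `Z`. -/
def dualQuant {N : ℕ} (x : Fin (N + 1) → ℝ) (μ : Measure ℝ) : Measure ℝ :=
  (μ.prod (volume.restrict (Icc (0:ℝ) 1))).map fun q => splitOp x q.1 q.2

/-!
A point `z` of the cell `[x i, x (i+1)]` is split into the two endpoints with the barycentric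
weights of `z`, so `∫ φ d(dualQuant x μ) = ∫ φ̌ dμ`, where `φ̌` is the piecewise affine
interpolation of `φ` on the grid. For convex `φ`, on `[x 0, x N]` the function `φ̌` is the
maximum of the chords of `φ` over the cells, a convex function. Hence `μ ≤_cvx η` applied to `φ̌`
gives `∫ φ d(dualQuant x μ) ≤ ∫ φ d(dualQuant x η)`.
-/

def chord (φ : ℝ → ℝ) (a b z : ℝ) : ℝ := φ a + (φ b - φ a) / (b - a) * (z - a)

section Chord

variable {φ : ℝ → ℝ} {a b : ℝ}

@[simp]
lemma chord_left (φ : ℝ → ℝ) (a b : ℝ) : chord φ a b a = φ a := by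
  simp [chord]

lemma chord_right (φ : ℝ → ℝ) (hab : a ≠ b) : chord φ a b b = φ b := by
  rw [chord, div_mul_cancel₀ _ (sub_ne_zero.2 hab.symm)]
  ring

lemma chord_affineCombination (φ : ℝ → ℝ) (a b : ℝ) {s t : ℝ} (hst : s + t = 1) (p q : ℝ) :
    chord φ a b (s * p + t * q) = s * chord φ a b p + t * chord φ a b q := by
  simp only [chord]
  linear_combination ((φ b - φ a) / (b - a) * a - φ a) * hst

lemma convexOn_chord (φ : ℝ → ℝ) (a b : ℝ) : ConvexOn ℝ univ (chord φ a b) :=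
  ⟨convex_univ, fun p _ q _ _ _ _ _ hst => (chord_affineCombination φ a b hst p q).le⟩

lemma continuous_chord (φ : ℝ → ℝ) (a b : ℝ) : Continuous (chord φ a b) := by
  unfold chord
  fun_prop

lemma ConvexOn.chord_le {s : Set ℝ} (hφ : ConvexOn ℝ s φ) (ha : a ∈ s) (hb : b ∈ s) {w : ℝ}
    (hw : w ∈ s) (hab : a < b) (hwab : w ∉ Ioo a b) : chord φ a b w ≤ φ w := by
  rcases not_and_or.1 hwab with hwa | hbw
  · rcases (not_lt.1 hwa).lt_or_eq with hwa | rfl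
    · have := (div_le_iff₀ (sub_pos.2 hwa)).1 (hφ.slope_mono_adjacent hw hb hwa hab)
      rw [chord]
      linear_combination this
    · exact (chord_left φ w b).le
  · rcases (not_lt.1 hbw).lt_or_eq with hbw | rfl
    · have := (le_div_iff₀ (sub_pos.2 hbw)).1 (hφ.slope_mono_adjacent ha hw hab hbw)
      rw [chord]
      have hslope : (φ b - φ a) / (b - a) * (b - a) = φ b - φ a :=
        div_mul_cancel₀ _ (sub_pos.2 hab).ne'
      linear_combination this + hslope
    · exact (chord_right φ hab.ne).le

lemma ConvexOn.chord_le_chord {s : Set ℝ} (hφ : ConvexOn ℝ s φ) {c d z : ℝ} (ha : a ∈ s)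
    (hb : b ∈ s) (hc : c ∈ s) (hd : d ∈ s) (hab : a < b) (hcd : c < d) (hcab : c ∉ Ioo a b)
    (hdab : d ∉ Ioo a b) (hz : z ∈ Icc c d) : chord φ a b z ≤ chord φ c d z := by
  rw [← segment_eq_Icc hcd.le] at hz
  obtain ⟨θ, ν, hθ, hν, hθν, rfl⟩ := hz
  simp only [smul_eq_mul]
  rw [chord_affineCombination φ a b hθν, chord_affineCombination φ c d hθν, chord_left,
    chord_right φ hcd.ne]
  gcongr
  exacts [hφ.chord_le ha hb hc hab hcab, hφ.chord_le ha hb hd hab hdab]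

end Chord

section Grid

variable {N : ℕ} {x : Fin (N + 1) → ℝ}

lemma StrictMono.notMem_Ioo_cell (hx : StrictMono x) (i : Fin N) (k : Fin (N + 1)) :
    x k ∉ Ioo (x i.castSucc) (x i.succ) := by
  rintro ⟨h₁, h₂⟩
  have h₁ := hx.lt_iff_lt.1 h₁
  have h₂ := hx.lt_iff_lt.1 h₂
  simp only [Fin.lt_def, Fin.val_castSucc, Fin.val_succ] at h₁ h₂
  omega

/-- The interpolation `φ̌` of a convex `φ` on `[x 0, x N]`, written as the maximum of the chords
over the cells so that its convexity is evident. -/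
def gridInterp [NeZero N] (x : Fin (N + 1) → ℝ) (φ : ℝ → ℝ) : ℝ → ℝ :=
  Finset.univ.sup' Finset.univ_nonempty fun i : Fin N => chord φ (x i.castSucc) (x i.succ)

variable [NeZero N] {φ : ℝ → ℝ}

lemma convexOn_gridInterp : ConvexOn ℝ univ (gridInterp x φ) :=
  Finset.sup'_induction _ _ (fun _ h₁ _ h₂ => h₁.sup h₂) fun _ _ => convexOn_chord _ _ _

lemma continuous_gridInterp : Continuous (gridInterp x φ) :=
  Continuous.finset_sup' _ fun _ _ => continuous_chord _ _ _

lemma gridInterp_eq_chord (hφ : ConvexOn ℝ univ φ) (hx : StrictMono x) {i : Fin N} {z : ℝ}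
    (hz : z ∈ Icc (x i.castSucc) (x i.succ)) :
    gridInterp x φ z = chord φ (x i.castSucc) (x i.succ) z := by
  rw [gridInterp, Finset.sup'_apply]
  refine le_antisymm (Finset.sup'_le _ _ fun j _ => ?_)
    (Finset.le_sup' (fun j : Fin N => chord φ (x j.castSucc) (x j.succ) z) (Finset.mem_univ i))
  exact hφ.chord_le_chord trivial trivial trivial trivial (hx Fin.castSucc_lt_succ)
    (hx Fin.castSucc_lt_succ) (hx.notMem_Ioo_cell j _) (hx.notMem_Ioo_cell j _) hz

end Grid

section Splitting

variable {N : ℕ} {x : Fin (N + 1) → ℝ} {z : ℝ}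

lemma exists_mem_cell (hz : z ∈ Ico (x 0) (x (Fin.last N))) :
    ∃ i : Fin N, z ∈ Ico (x i.castSucc) (x i.succ) := by
  by_contra! h
  have hle : ∀ k : Fin (N + 1), x k ≤ z := by
    intro k
    induction k using Fin.induction with
    | zero => exact hz.1
    | succ i ih => exact not_lt.1 fun hlt => h i ⟨ih, hlt⟩
  exact (hle (Fin.last N)).not_gt hz.2

lemma StrictMono.cell_unique (hx : StrictMono x) {i j : Fin N}
    (hi : z ∈ Ico (x i.castSucc) (x i.succ)) (hj : z ∈ Ico (x j.castSucc) (x j.succ)) :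
    i = j := by
  have hle : ∀ {i j : Fin N}, z ∈ Ico (x i.castSucc) (x i.succ) →
      z ∈ Ico (x j.castSucc) (x j.succ) → i ≤ j := by
    intro i j hi hj
    by_contra! hji
    have := hx.monotone (Fin.succ_le_castSucc_iff.2 hji)
    linarith [hi.1, hj.2]
  exact le_antisymm (hle hi hj) (hle hj hi)

lemma splitOp_of_mem_cell (hx : StrictMono x) {i : Fin N}
    (hi : z ∈ Ico (x i.castSucc) (x i.succ)) (u : ℝ) :
    splitOp x z u =
      if u ≤ (x i.succ - z) / (x i.succ - x i.castSucc) then x i.castSucc else x i.succ := by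
  have h : ∃ k : Fin N, x k.castSucc ≤ z ∧ z < x k.succ := ⟨i, hi⟩
  rw [splitOp, dif_pos h, hx.cell_unique (Classical.choose_spec h) hi]

lemma splitOp_of_forall_notMem_cell (h : ∀ i : Fin N, z ∉ Ico (x i.castSucc) (x i.succ))
    (u : ℝ) : splitOp x z u = z := by
  rw [splitOp, dif_neg]
  exact fun ⟨i, hi⟩ => h i hi

lemma splitOp_last (hx : StrictMono x) (u : ℝ) :
    splitOp x (x (Fin.last N)) u = x (Fin.last N) :=
  splitOp_of_forall_notMem_cell (fun _ hi => hi.2.not_ge (hx.monotone (Fin.le_last _))) u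

lemma splitOp_mem_Icc (hx : StrictMono x) (hz : z ∈ Icc (x 0) (x (Fin.last N))) (u : ℝ) :
    splitOp x z u ∈ Icc (x 0) (x (Fin.last N)) := by
  have hgrid (k : Fin (N + 1)) : x k ∈ Icc (x 0) (x (Fin.last N)) :=
    ⟨hx.monotone (Fin.zero_le k), hx.monotone (Fin.le_last k)⟩
  rw [splitOp]
  split_ifs
  exacts [hgrid _, hgrid _, hz]

lemma splitOp_eq_sum (hx : StrictMono x) (z u : ℝ) :
    splitOp x z u =
      (∑ i : Fin N, if z ∈ Ico (x i.castSucc) (x i.succ) then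
        (if u ≤ (x i.succ - z) / (x i.succ - x i.castSucc) then x i.castSucc else x i.succ)
        else 0) +
      if z ∈ Ico (x 0) (x (Fin.last N)) then 0 else z := by
  by_cases h : ∃ i : Fin N, z ∈ Ico (x i.castSucc) (x i.succ)
  · obtain ⟨i, hi⟩ := h
    have hz : z ∈ Ico (x 0) (x (Fin.last N)) :=
      ⟨(hx.monotone (Fin.zero_le _)).trans hi.1, hi.2.trans_le (hx.monotone (Fin.le_last _))⟩
    rw [Finset.sum_eq_single_of_mem i (Finset.mem_univ i)
      fun j _ hji => if_neg fun hj => hji (hx.cell_unique hj hi),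
      if_pos hi, if_pos hz, add_zero, splitOp_of_mem_cell hx hi]
  · rw [not_exists] at h
    rw [Finset.sum_eq_zero fun i _ => if_neg (h i), zero_add,
      if_neg fun hz => (exists_mem_cell hz).elim fun i hi => h i hi,
      splitOp_of_forall_notMem_cell h]

lemma measurable_splitOp (hx : StrictMono x) :
    Measurable fun p : ℝ × ℝ => splitOp x p.1 p.2 := by
  simp_rw [splitOp_eq_sum hx]
  refine .add (Finset.measurable_sum _ fun i _ => ?_)
    (.ite (measurable_fst measurableSet_Ico) measurable_const measurable_fst)
  refine .ite (measurable_fst measurableSet_Ico) (.ite ?_ measurable_const measurable_const)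
    measurable_const
  exact measurableSet_le measurable_snd (by fun_prop)

end Splitting

section Integration

variable {N : ℕ} {x : Fin (N + 1) → ℝ} {φ : ℝ → ℝ} {z : ℝ}

lemma setIntegral_Icc_ite_le {t : ℝ} (ht : t ∈ Icc (0 : ℝ) 1) (a b : ℝ) :
    ∫ u in Icc (0 : ℝ) 1, (if u ≤ t then a else b) = t * a + (1 - t) * b := by
  have hite : (fun u : ℝ => if u ≤ t then a else b) =
      fun u => (Iic t).indicator (fun _ => a - b) u + b := by
    ext u
    by_cases hu : u ≤ t <;> simp [hu]
  have hcap : Iic t ∩ Icc 0 1 = Icc 0 t := by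
    ext u
    simp only [mem_inter_iff, mem_Iic, mem_Icc]
    grind
  rw [hite, integral_add ((integrable_const _).indicator measurableSet_Iic) (integrable_const b),
    integral_indicator_const _ measurableSet_Iic, integral_const,
    measureReal_restrict_apply measurableSet_Iic, hcap, measureReal_restrict_apply_univ,
    Real.volume_real_Icc, Real.volume_real_Icc]
  simp only [sub_zero, smul_eq_mul, max_eq_left ht.1, max_eq_left zero_le_one]
  ring

lemma setIntegral_splitOp_of_mem_cell (hx : StrictMono x) (φ : ℝ → ℝ) {i : Fin N}
    (hi : z ∈ Ico (x i.castSucc) (x i.succ)) :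
    ∫ u in Icc (0 : ℝ) 1, φ (splitOp x z u) = chord φ (x i.castSucc) (x i.succ) z := by
  have hlen : 0 < x i.succ - x i.castSucc := sub_pos.2 (hx Fin.castSucc_lt_succ)
  have ht : (x i.succ - z) / (x i.succ - x i.castSucc) ∈ Icc (0 : ℝ) 1 :=
    ⟨div_nonneg (by linarith [hi.2]) hlen.le, (div_le_one hlen).2 (by linarith [hi.1])⟩
  simp_rw [splitOp_of_mem_cell hx hi, apply_ite φ]
  rw [setIntegral_Icc_ite_le ht, chord]
  field_simp
  ring

lemma setIntegral_splitOp_last (hx : StrictMono x) (φ : ℝ → ℝ) :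
    ∫ u in Icc (0 : ℝ) 1, φ (splitOp x (x (Fin.last N)) u) = φ (x (Fin.last N)) := by
  simp_rw [splitOp_last hx]
  simp [Real.volume_real_Icc]

lemma setIntegral_splitOp_eq_gridInterp [NeZero N] (hφ : ConvexOn ℝ univ φ) (hx : StrictMono x)
    (hz : z ∈ Icc (x 0) (x (Fin.last N))) :
    ∫ u in Icc (0 : ℝ) 1, φ (splitOp x z u) = gridInterp x φ z := by
  rcases hz.2.lt_or_eq with hlt | rfl
  · obtain ⟨i, hi⟩ := exists_mem_cell ⟨hz.1, hlt⟩
    rw [setIntegral_splitOp_of_mem_cell hx φ hi,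
      gridInterp_eq_chord hφ hx (Ico_subset_Icc_self hi)]
  · obtain ⟨M, rfl⟩ := Nat.exists_eq_succ_of_ne_zero (NeZero.ne N)
    have hlast : x (Fin.last (M + 1)) ∈ Icc (x (Fin.last M).castSucc) (x (Fin.last M).succ) := by
      rw [Fin.succ_last]
      exact ⟨hx.monotone (Fin.le_last _), le_rfl⟩
    rw [setIntegral_splitOp_last hx, gridInterp_eq_chord hφ hx hlast, Fin.succ_last,
      chord_right φ (hx (Fin.castSucc_lt_last _)).ne]

lemma exists_convexOn_setIntegral_splitOp (hφ : ConvexOn ℝ univ φ) (hx : StrictMono x) :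
    ∃ ψ : ℝ → ℝ, ConvexOn ℝ univ ψ ∧ Continuous ψ ∧
      ∀ z ∈ Icc (x 0) (x (Fin.last N)), ∫ u in Icc (0 : ℝ) 1, φ (splitOp x z u) = ψ z := by
  rcases N with _ | M
  -- a one-point grid has no cells, hence no chords
  · refine ⟨fun _ => φ (x 0), convexOn_const _ convex_univ, continuous_const, fun z hz => ?_⟩
    obtain rfl : z = x (Fin.last 0) := le_antisymm hz.2 hz.1
    exact setIntegral_splitOp_last hx φ
  · exact ⟨gridInterp x φ, convexOn_gridInterp, continuous_gridInterp,
      fun z hz => setIntegral_splitOp_eq_gridInterp hφ hx hz⟩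

end Integration

lemma Continuous.integrable_of_measure_compl_eq_zero {X F : Type*} [TopologicalSpace X]
    [T2Space X] [MeasurableSpace X] [OpensMeasurableSpace X] [NormedAddCommGroup F] {f : X → F}
    (hf : Continuous f) {μ : Measure X} [IsFiniteMeasure μ] {K : Set X} (hK : IsCompact K)
    (hμK : μ Kᶜ = 0) : Integrable f μ := by
  rw [← Measure.restrict_eq_self_of_ae_mem (mem_ae_iff.2 hμK)]
  exact hf.continuousOn.integrableOn_compact hK

section DualQuant

variable {N : ℕ} {x : Fin (N + 1) → ℝ} {μ : Measure ℝ}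

instance [IsFiniteMeasure μ] : IsFiniteMeasure (dualQuant x μ) := by
  unfold dualQuant
  infer_instance

lemma dualQuant_compl_Icc_eq_zero (hx : StrictMono x)
    (hμ : μ (Icc (x 0) (x (Fin.last N)))ᶜ = 0) :
    dualQuant x μ (Icc (x 0) (x (Fin.last N)))ᶜ = 0 := by
  rw [dualQuant, Measure.map_apply (measurable_splitOp hx) measurableSet_Icc.compl]
  refine measure_mono_null (fun p hp => ⟨fun hp₁ => hp (splitOp_mem_Icc hx hp₁ p.2), trivial⟩)
    (t := (Icc (x 0) (x (Fin.last N)))ᶜ ×ˢ univ) ?_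
  rw [Measure.prod_prod, hμ, zero_mul]

lemma integral_dualQuant [IsFiniteMeasure μ] (hx : StrictMono x)
    (hμ : μ (Icc (x 0) (x (Fin.last N)))ᶜ = 0) {φ ψ : ℝ → ℝ} (hφ : Continuous φ)
    (hφψ : ∀ z ∈ Icc (x 0) (x (Fin.last N)), ∫ u in Icc (0 : ℝ) 1, φ (splitOp x z u) = ψ z) :
    ∫ y, φ y ∂dualQuant x μ = ∫ z, ψ z ∂μ := by
  have hint :=
    hφ.integrable_of_measure_compl_eq_zero isCompact_Icc (dualQuant_compl_Icc_eq_zero hx hμ)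
  rw [dualQuant, integrable_map_measure hφ.aestronglyMeasurable
    (measurable_splitOp hx).aemeasurable] at hint
  rw [dualQuant, integral_map (measurable_splitOp hx).aemeasurable hφ.aestronglyMeasurable,
    integral_prod (fun p : ℝ × ℝ => φ (splitOp x p.1 p.2)) hint]
  exact integral_congr_ae (Filter.Eventually.mono (mem_ae_iff.2 hμ) hφψ)

end DualQuant

theorem stmt17 (N : ℕ) (x : Fin (N + 1) → ℝ) (hx : StrictMono x)
    (μ η : Measure ℝ) [IsProbabilityMeasure μ] [IsProbabilityMeasure η]
    (hμs : μ ((Icc (x 0) (x (Fin.last N)))ᶜ) = 0)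
    (hηs : η ((Icc (x 0) (x (Fin.last N)))ᶜ) = 0)
    (hcvx : ConvexOrder μ η) :
    ConvexOrder (dualQuant x μ) (dualQuant x η) := by
  intro φ hφ _ _
  have hφc : Continuous φ := continuousOn_univ.1 (hφ.continuousOn isOpen_univ)
  obtain ⟨ψ, hψ, hψc, hφψ⟩ := exists_convexOn_setIntegral_splitOp hφ hx
  rw [integral_dualQuant hx hμs hφc hφψ, integral_dualQuant hx hηs hφc hφψ]
  exact hcvx ψ hψ (hψc.integrable_of_measure_compl_eq_zero isCompact_Icc hμs)
    (hψc.integrable_of_measure_compl_eq_zero isCompact_Icc hηs)
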